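/- Let c, c' > 0, set a := (c−1)² + 2cc' + (c')² + 2c', μ₊ := (1−c−c'+√a)/2 and μ₋ := (c+c'−1+√a)/2, and define x(t) := (1/√a)·[((c'−c+√a+1)/2)·e^{μ₊ t} − ((c'−c−√a+1)/2)·e^{−μ₋ t}] and y(t) := (c/√a)·(e^{μ₊ t} − e^{−μ₋ t}) for t ≥ 0. Then for every λ > 0 with λ² ≥ 1 − c − c' + √a, one has lim_{t → ∞} (x(t) + y(t)) · e^{−λ² t/2} / (λ·√(2πt)) = 0. -/

import Mathlib

/-! Since `μ₊ + μ₋ = √a ≥ 0`, both `x(t)` and `y(t)` are `O(e^{μ₊ t})`, and the hypothesis on `λ`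
says exactly `μ₊ ≤ λ²/2`; so `(x + y)(t) e^{−λ²t/2}` stays bounded while `λ√(2πt) → ∞`. -/

open Real Filter

/-- `a = (c−1)² + 2cc' + (c')² + 2c'`. -/
noncomputable def aConst (c c' : ℝ) : ℝ := (c - 1) ^ 2 + 2 * c * c' + c' ^ 2 + 2 * c'

/-- `μ₊ = (1 − c − c' + √a)/2`. -/
noncomputable def muPlus (c c' : ℝ) : ℝ := (1 - c - c' + Real.sqrt (aConst c c')) / 2

/-- `μ₋ = (c + c' − 1 + √a)/2`. -/
noncomputable def muMinus (c c' : ℝ) : ℝ := (c + c' - 1 + Real.sqrt (aConst c c')) / 2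

/-- Expected number of active particles
`x(t) = (1/√a)[((c'−c+√a+1)/2) e^{μ₊ t} − ((c'−c−√a+1)/2) e^{−μ₋ t}]`. -/
noncomputable def xActive (c c' t : ℝ) : ℝ :=
  (1 / Real.sqrt (aConst c c')) *
    (((c' - c + Real.sqrt (aConst c c') + 1) / 2) * Real.exp (muPlus c c' * t) -
      ((c' - c - Real.sqrt (aConst c c') + 1) / 2) * Real.exp (-muMinus c c' * t))

/-- Expected number of dormant particles `y(t) = (c/√a)(e^{μ₊ t} − e^{−μ₋ t})`. -/
noncomputable def yDormant (c c' t : ℝ) : ℝ :=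
  (c / Real.sqrt (aConst c c')) * (Real.exp (muPlus c c' * t) - Real.exp (-muMinus c c' * t))

open Asymptotics

lemma isBigO_exp_mul_atTop_of_le {μ ν : ℝ} (h : μ ≤ ν) :
    (fun t => exp (μ * t)) =O[atTop] fun t => exp (ν * t) := by
  refine Eventually.isBigO ?_
  filter_upwards [eventually_ge_atTop 0] with t ht
  rw [norm_of_nonneg (exp_pos _).le]
  gcongr

lemma tendsto_const_mul_sqrt_const_mul_atTop {α β : ℝ} (hα : 0 < α) (hβ : 0 < β) :
    Tendsto (fun t => α * √(β * t)) atTop atTop :=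
  (tendsto_sqrt_atTop.comp (tendsto_id.const_mul_atTop hβ)).const_mul_atTop hα

lemma muPlus_add_muMinus (c c' : ℝ) : muPlus c c' + muMinus c c' = √(aConst c c') := by
  unfold muPlus muMinus
  ring

lemma isBigO_xActive_add_yDormant (c c' : ℝ) :
    (fun t => xActive c c' t + yDormant c c' t) =O[atTop] fun t => exp (muPlus c c' * t) := by
  have hplus := isBigO_refl (fun t => exp (muPlus c c' * t)) atTop
  have hminus : (fun t => exp (-muMinus c c' * t)) =O[atTop] fun t => exp (muPlus c c' * t) :=
    isBigO_exp_mul_atTop_of_le <| by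
      linarith [muPlus_add_muMinus c c', sqrt_nonneg (aConst c c')]
  unfold xActive yDormant
  exact (((hplus.const_mul_left _).sub (hminus.const_mul_left _)).const_mul_left _).add
    ((hplus.sub hminus).const_mul_left _)

theorem expected_particles_times_gaussian_tail_tendsto_zero_general
    (c c' lam : ℝ) (hlam : 0 < lam)
    (hspeed : lam ^ 2 ≥ 1 - c - c' + Real.sqrt (aConst c c')) :
    Tendsto (fun t : ℝ =>
        (xActive c c' t + yDormant c c' t) * Real.exp (-lam ^ 2 * t / 2) /
          (lam * Real.sqrt (2 * Real.pi * t)))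
      atTop (nhds 0) := by
  have hgrowth : muPlus c c' ≤ lam ^ 2 / 2 := by
    unfold muPlus
    linarith
  have hbounded : (fun t => (xActive c c' t + yDormant c c' t) * exp (-lam ^ 2 * t / 2))
      =O[atTop] fun _ => (1 : ℝ) := by
    refine (((isBigO_xActive_add_yDormant c c').trans (isBigO_exp_mul_atTop_of_le hgrowth)).mul
      (isBigO_refl (fun t => exp (-lam ^ 2 * t / 2)) atTop)).congr_right fun t => ?_
    rw [← exp_add, ← exp_zero]
    ring_nf
  have hdenom : Tendsto (fun t => (lam * √(2 * π * t))⁻¹) atTop (nhds 0) :=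
    (tendsto_const_mul_sqrt_const_mul_atTop hlam (by positivity)).inv_tendsto_atTop
  simpa only [div_eq_mul_inv, one_mul] using
    (hbounded.mul (isBigO_refl _ atTop)).trans_tendsto (by simpa only [one_mul] using hdenom)

/-- For `λ > 0` with `λ² ≥ 1 − c − c' + √a`, the product of the expected total number of
particles with the Gaussian tail bound `e^{−λ²t/2}/(λ√(2πt))` vanishes as `t → ∞`. -/
theorem expected_particles_times_gaussian_tail_tendsto_zero
    (c c' lam : ℝ) (hc : 0 < c) (hc' : 0 < c') (hlam : 0 < lam)
    (hspeed : lam ^ 2 ≥ 1 - c - c' + Real.sqrt (aConst c c')) :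
    Tendsto (fun t : ℝ =>
        (xActive c c' t + yDormant c c' t) * Real.exp (-lam ^ 2 * t / 2) /
          (lam * Real.sqrt (2 * Real.pi * t)))
      atTop (nhds 0) :=
  expected_particles_times_gaussian_tail_tendsto_zero_general c c' lam hlam hspeed
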